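/- With Θ̂ⱼ = (1/τ̂ⱼ²)(−γ̂ⱼ with a 1 in position j), i.e. XΘ̂ⱼᵀ/n = (Xⱼ − X₋ⱼγ̂ⱼ)/(n τ̂ⱼ²), the nodewise-Lasso construction satisfies XⱼᵀXΘ̂ⱼᵀ/n = 1 and ‖X₋ⱼᵀXΘ̂ⱼᵀ/n‖_∞ ≤ λⱼ/τ̂ⱼ², hence ‖eⱼ − Σ̂Θ̂ⱼᵀ‖_∞ ≤ λⱼ/τ̂ⱼ² where Σ̂ = XᵀX/n. -/

import Mathlib

open Matrix

/-!
Since `γ̂ⱼ` vanishes at `j`, the row `Θ̂ⱼ` is `τ̂ⱼ⁻² (eⱼ - γ̂ⱼ)`, so `X Θ̂ⱼᵀ` is the nodewise residual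
`Xⱼ - X₋ⱼ γ̂ⱼ` divided by `τ̂ⱼ²`. Correlating it with the columns of `X` turns the two KKT conditions
into the first two claims, and the `l`-th entry of `Σ̂ Θ̂ⱼᵀ` is exactly that correlation with column `l`.
-/

theorem nodewise_row_eq_smul {ι K : Type*} [DecidableEq ι] [Field K] {γ : ι → K} {j : ι}
    (hγj : γ j = 0) (τ : K) :
    (fun l => if l = j then 1 / τ else -γ l / τ) = τ⁻¹ • (Pi.single j 1 - γ) := by
  funext l
  by_cases hl : l = j
  · subst hl
    simp [hγj]
  · simp [hl, div_eq_inv_mul]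

theorem mulVec_nodewise_row {m ι K : Type*} [Fintype ι] [DecidableEq ι] [Field K]
    (X : Matrix m ι K) {γ : ι → K} {j : ι} (hγj : γ j = 0) (τ : K) :
    X *ᵥ (fun l => if l = j then 1 / τ else -γ l / τ) =
      τ⁻¹ • fun i => X i j - (X *ᵥ γ) i := by
  rw [nodewise_row_eq_smul hγj, mulVec_smul, mulVec_sub, mulVec_single_one]
  rfl

theorem sum_mul_mulVec_nodewise_row {m ι K : Type*} [Fintype m] [Fintype ι] [DecidableEq ι]
    [Field K] (X : Matrix m ι K) {γ : ι → K} {j : ι} (hγj : γ j = 0) (τ : K) (l : ι) :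
    ∑ i, X i l * (X *ᵥ fun l => if l = j then 1 / τ else -γ l / τ) i =
      (∑ i, X i l * (X i j - (X *ᵥ γ) i)) / τ := by
  simp only [mulVec_nodewise_row X hγj, Pi.smul_apply, smul_eq_mul, Finset.sum_div]
  exact Finset.sum_congr rfl fun i _ => by ring

theorem gram_mulVec_apply {m ι K : Type*} [Fintype m] [Fintype ι] [CommSemiring K]
    (X : Matrix m ι K) (v : ι → K) (l : ι) :
    ((Xᵀ * X) *ᵥ v) l = ∑ i, X i l * (X *ᵥ v) i := by
  rw [← mulVec_mulVec, mulVec_transpose]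
  simp only [vecMul, dotProduct, mul_comm]

theorem stmt_13_general (n p : ℕ) (X : Matrix (Fin n) (Fin p) ℝ)
    (j : Fin p) (lamj : ℝ) (hlam : 0 < lamj)
    (γhat : Fin p → ℝ) (hγj : γhat j = 0)
    (τsq : ℝ) (hτ : τsq = (∑ i, X i j * (X i j - (X *ᵥ γhat) i)) / n)
    (hτpos : 0 < τsq)
    (hKKT2 : ∀ l, l ≠ j → |(∑ i, X i l * (X i j - (X *ᵥ γhat) i)) / n| ≤ lamj)
    (Θrow : Fin p → ℝ)
    (hΘ : Θrow = fun l => if l = j then 1 / τsq else -γhat l / τsq) :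
    (∑ i, X i j * (X *ᵥ Θrow) i) / n = 1 ∧
      (∀ l, l ≠ j → |(∑ i, X i l * (X *ᵥ Θrow) i) / n| ≤ lamj / τsq) ∧
      (∀ l, |(if l = j then (1 : ℝ) else 0) - (((Xᵀ * X) *ᵥ Θrow) l) / n| ≤
        lamj / τsq) := by
  have hcorr : ∀ l, (∑ i, X i l * (X *ᵥ Θrow) i) / n =
      (∑ i, X i l * (X i j - (X *ᵥ γhat) i)) / n / τsq := by
    intro l
    rw [hΘ, sum_mul_mulVec_nodewise_row X hγj, div_right_comm]
  have hdiag : (∑ i, X i j * (X *ᵥ Θrow) i) / n = 1 := by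
    rw [hcorr, ← hτ, div_self hτpos.ne']
  have hoff : ∀ l, l ≠ j → |(∑ i, X i l * (X *ᵥ Θrow) i) / n| ≤ lamj / τsq := by
    intro l hl
    rw [hcorr, abs_div, abs_of_pos hτpos]
    exact div_le_div_of_nonneg_right (hKKT2 l hl) hτpos.le
  refine ⟨hdiag, hoff, fun l => ?_⟩
  rw [gram_mulVec_apply]
  split_ifs with hl
  · subst hl
    rw [hdiag, sub_self, abs_zero]
    positivity
  · rw [zero_sub, abs_neg]
    exact hoff l hl

/-- Properties of the nodewise-Lasso row Θ̂ⱼ of the approximate inverse: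
XⱼᵀXΘ̂ⱼᵀ/n = 1, ‖X₋ⱼᵀXΘ̂ⱼᵀ/n‖_∞ ≤ λⱼ/τ̂ⱼ², and hence
‖eⱼ − Σ̂Θ̂ⱼᵀ‖_∞ ≤ λⱼ/τ̂ⱼ² with Σ̂ = XᵀX/n. -/
theorem stmt_13 (n p : ℕ) (hn : 0 < n) (X : Matrix (Fin n) (Fin p) ℝ)
    (j : Fin p) (lamj : ℝ) (hlam : 0 < lamj)
    (γhat : Fin p → ℝ) (hγj : γhat j = 0)
    (τsq : ℝ) (hτ : τsq = (∑ i, X i j * (X i j - (X *ᵥ γhat) i)) / n)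
    (hτpos : 0 < τsq)
    (hKKT2 : ∀ l, l ≠ j → |(∑ i, X i l * (X i j - (X *ᵥ γhat) i)) / n| ≤ lamj)
    (Θrow : Fin p → ℝ)
    (hΘ : Θrow = fun l => if l = j then 1 / τsq else -γhat l / τsq) :
    (∑ i, X i j * (X *ᵥ Θrow) i) / n = 1 ∧
      (∀ l, l ≠ j → |(∑ i, X i l * (X *ᵥ Θrow) i) / n| ≤ lamj / τsq) ∧
      (∀ l, |(if l = j then (1 : ℝ) else 0) - (((Xᵀ * X) *ᵥ Θrow) l) / n| ≤
        lamj / τsq) :=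
  stmt_13_general n p X j lamj hlam γhat hγj τsq hτ hτpos hKKT2 Θrow hΘ
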